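/- Let u be a power partial isometry. Then for all k, l, m ≥ 0 the element p_k q_l u^m (where p_k = u*^k u^k, q_l = u^l u*^l, u^0 = 1) is a partial isometry, with (p_k q_l u^m)(p_k q_l u^m)* = p_k q_{max(l,m)}. -/

import Mathlib

/-!
The projections `p_k = u⋆ᵏ uᵏ` and `q_l = uˡ u⋆ˡ` commute because `uᵏ uˡ = uᵏ⁺ˡ` is again a
partial isometry, which makes `p_k q_l` idempotent; and for star projections `P`, `Q` with `P Q`
idempotent, `y = P Q - P Q P` satisfies `y y⋆ = 0` in a C⋆-ring, so `P Q = P Q P` is self-adjoint.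
With this commutation and `q_l q_m = q_{max(l,m)}`, both identities for `x = p_k q_l uᵐ` follow
from `x x⋆ = p_k q_{max(l,m)}` and `q_l uᵐ = q_{max(l,m)} uᵐ`.
-/

def IsPartialIsometry {R : Type*} [Mul R] [Star R] (a : R) : Prop :=
  a * star a * a = a

def IsPowerPartialIsometry {R : Type*} [Monoid R] [Star R] (u : R) : Prop :=
  ∀ k : ℕ, IsPartialIsometry (u ^ k)

/-- The paper's `p_k`. -/
def initProj {R : Type*} [Monoid R] [Star R] (u : R) (k : ℕ) : R :=
  star u ^ k * u ^ k

/-- The paper's `q_l`. -/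
def finalProj {R : Type*} [Monoid R] [Star R] (u : R) (l : ℕ) : R :=
  u ^ l * star u ^ l

theorem IsStarProjection.commute_of_isIdempotentElem_mul {A : Type*} [NonUnitalNormedRing A]
    [StarRing A] [CStarRing A] {p q : A} (hp : IsStarProjection p) (hq : IsStarProjection q)
    (hpq : IsIdempotentElem (p * q)) : Commute p q := by
  have hp' : ∀ x : A, x * p * p = x * p := fun x => by rw [mul_assoc, hp.isIdempotentElem.eq]
  have hq' : ∀ x : A, x * q * q = x * q := fun x => by rw [mul_assoc, hq.isIdempotentElem.eq]
  have hpq' : p * q * p * q = p * q := by rw [mul_assoc (p * q), hpq.eq]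
  have hzero : p * q - p * q * p = 0 := by
    rw [← CStarRing.mul_star_self_eq_zero_iff]
    simp only [star_sub, star_mul, hp.isSelfAdjoint.star_eq, hq.isSelfAdjoint.star_eq, mul_sub,
      sub_mul, ← mul_assoc, hp', hq', hpq', sub_self, zero_mul]
  have hself : p * q = p * q * p := sub_eq_zero.mp hzero
  calc p * q = p * q * p := hself
    _ = star (p * q * p) := by
        simp only [star_mul, hp.isSelfAdjoint.star_eq, hq.isSelfAdjoint.star_eq, mul_assoc]
    _ = star (p * q) := by rw [← hself]
    _ = q * p := by simp only [star_mul, hp.isSelfAdjoint.star_eq, hq.isSelfAdjoint.star_eq]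

namespace IsPartialIsometry

section Semigroup

variable {R : Type*} [Semigroup R] [StarMul R] {a : R}

protected theorem star (ha : IsPartialIsometry a) : IsPartialIsometry (star a) := by
  unfold IsPartialIsometry at ha ⊢
  simpa only [star_star, star_mul, mul_assoc] using congrArg star ha

theorem isStarProjection_star_mul_self (ha : IsPartialIsometry a) :
    IsStarProjection (star a * a) where
  isIdempotentElem := by
    rw [IsIdempotentElem, mul_assoc, ← mul_assoc a, ha]
  isSelfAdjoint := .star_mul_self a

theorem isStarProjection_mul_star_self (ha : IsPartialIsometry a) :
    IsStarProjection (a * star a) := by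
  simpa only [star_star] using ha.star.isStarProjection_star_mul_self

end Semigroup

theorem commute_of_mul {A : Type*} [NonUnitalNormedRing A] [StarRing A] [CStarRing A] {a b : A}
    (ha : IsPartialIsometry a) (hb : IsPartialIsometry b) (hab : IsPartialIsometry (a * b)) :
    Commute (star a * a) (b * star b) := by
  refine ha.isStarProjection_star_mul_self.commute_of_isIdempotentElem_mul
    hb.isStarProjection_mul_star_self ?_
  calc star a * a * (b * star b) * (star a * a * (b * star b))
      = star a * (a * b * star (a * b) * (a * b)) * star b := by
        simp only [star_mul, mul_assoc]
    _ = star a * a * (b * star b) := by rw [hab]; simp only [mul_assoc]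

end IsPartialIsometry

namespace IsPowerPartialIsometry

section Monoid

variable {R : Type*} [Monoid R] [StarMul R] {u : R}

theorem pow_mul_star_pow_mul_pow (hu : IsPowerPartialIsometry u) (k : ℕ) :
    u ^ k * star u ^ k * u ^ k = u ^ k := by
  simpa only [IsPartialIsometry, star_pow] using hu k

theorem isStarProjection_initProj (hu : IsPowerPartialIsometry u) (k : ℕ) :
    IsStarProjection (initProj u k) := by
  simpa only [initProj, star_pow] using (hu k).isStarProjection_star_mul_self

theorem isStarProjection_finalProj (hu : IsPowerPartialIsometry u) (l : ℕ) :
    IsStarProjection (finalProj u l) := by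
  simpa only [finalProj, star_pow] using (hu l).isStarProjection_mul_star_self

theorem finalProj_mul_finalProj_of_le (hu : IsPowerPartialIsometry u) {l m : ℕ} (h : l ≤ m) :
    finalProj u l * finalProj u m = finalProj u m := by
  obtain ⟨c, rfl⟩ := Nat.exists_eq_add_of_le h
  calc finalProj u l * finalProj u (l + c)
      = u ^ l * star u ^ l * u ^ l * (u ^ c * star u ^ (l + c)) := by
        simp only [finalProj, pow_add, mul_assoc]
    _ = finalProj u (l + c) := by
        rw [hu.pow_mul_star_pow_mul_pow, finalProj, pow_add u, mul_assoc]

theorem finalProj_mul_finalProj (hu : IsPowerPartialIsometry u) (l m : ℕ) :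
    finalProj u l * finalProj u m = finalProj u (max l m) := by
  rcases le_total l m with h | h
  · rw [max_eq_right h, hu.finalProj_mul_finalProj_of_le h]
  · rw [max_eq_left h]
    have := congrArg star (hu.finalProj_mul_finalProj_of_le h)
    rwa [star_mul, (hu.isStarProjection_finalProj l).isSelfAdjoint.star_eq,
      (hu.isStarProjection_finalProj m).isSelfAdjoint.star_eq] at this

theorem finalProj_mul_pow (hu : IsPowerPartialIsometry u) (l m : ℕ) :
    finalProj u l * u ^ m = finalProj u (max l m) * u ^ m := by
  calc finalProj u l * u ^ m = finalProj u l * (finalProj u m * u ^ m) := by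
        rw [show finalProj u m * u ^ m = u ^ m from hu.pow_mul_star_pow_mul_pow m]
    _ = finalProj u (max l m) * u ^ m := by rw [← mul_assoc, hu.finalProj_mul_finalProj]

end Monoid

variable {A : Type*} [NormedRing A] [StarRing A] [CStarRing A] {u : A}

theorem commute_initProj_finalProj (hu : IsPowerPartialIsometry u) (k l : ℕ) :
    Commute (initProj u k) (finalProj u l) := by
  simpa only [initProj, finalProj, star_pow] using
    (hu k).commute_of_mul (hu l) (by rw [← pow_add]; exact hu (k + l))

theorem initProj_mul_finalProj_mul_pow_mul_star (hu : IsPowerPartialIsometry u) (k l m : ℕ) :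
    initProj u k * finalProj u l * u ^ m * star (initProj u k * finalProj u l * u ^ m) =
      initProj u k * finalProj u (max l m) := by
  have hp := hu.isStarProjection_initProj k
  have hstar : star (initProj u k * finalProj u l * u ^ m) =
      star u ^ m * finalProj u l * initProj u k := by
    rw [star_mul, star_mul, hp.isSelfAdjoint.star_eq,
      (hu.isStarProjection_finalProj l).isSelfAdjoint.star_eq, star_pow, mul_assoc]
  calc initProj u k * finalProj u l * u ^ m * star (initProj u k * finalProj u l * u ^ m)
      = initProj u k * (finalProj u l * finalProj u m * finalProj u l) * initProj u k := by
        rw [hstar]; simp only [finalProj, mul_assoc]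
    _ = initProj u k * finalProj u (max l m) * initProj u k := by
        rw [hu.finalProj_mul_finalProj, hu.finalProj_mul_finalProj, max_eq_left (le_max_left l m)]
    _ = initProj u k * finalProj u (max l m) := by
        rw [mul_assoc, ← (hu.commute_initProj_finalProj k _).eq, ← mul_assoc,
          hp.isIdempotentElem.eq]

theorem isPartialIsometry_initProj_mul_finalProj_mul_pow (hu : IsPowerPartialIsometry u)
    (k l m : ℕ) : IsPartialIsometry (initProj u k * finalProj u l * u ^ m) := by
  rw [IsPartialIsometry, hu.initProj_mul_finalProj_mul_pow_mul_star]
  calc initProj u k * finalProj u (max l m) * (initProj u k * finalProj u l * u ^ m)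
      = initProj u k * (finalProj u (max l m) * initProj u k) * finalProj u l * u ^ m := by
        simp only [mul_assoc]
    _ = initProj u k * initProj u k * (finalProj u (max l m) * finalProj u l) * u ^ m := by
        rw [← (hu.commute_initProj_finalProj k _).eq]
        simp only [mul_assoc]
    _ = initProj u k * finalProj u (max l m) * u ^ m := by
        rw [(hu.isStarProjection_initProj k).isIdempotentElem.eq, hu.finalProj_mul_finalProj,
          max_eq_left (le_max_left l m)]
    _ = initProj u k * finalProj u l * u ^ m := by
        rw [mul_assoc, ← hu.finalProj_mul_pow, ← mul_assoc]

end IsPowerPartialIsometry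

/-- For a power partial isometry `u`, the element `p_k q_l uᵐ`
(`p_k = u*ᵏ uᵏ`, `q_l = uˡ u*ˡ`, `u⁰ = 1`) is a partial isometry with final
projection `p_k q_{max(l,m)}`, for all `k, l, m ≥ 0`. -/
theorem stmt_12 {H : Type*} [NormedAddCommGroup H] [InnerProductSpace ℂ H] [CompleteSpace H]
    (u : H →L[ℂ] H)
    (hpow : ∀ k : ℕ, 1 ≤ k → u ^ k * (star u) ^ k * u ^ k = u ^ k) :
    ∀ k l m : ℕ,
      (((star u) ^ k * u ^ k) * (u ^ l * (star u) ^ l) * u ^ m) *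
          star (((star u) ^ k * u ^ k) * (u ^ l * (star u) ^ l) * u ^ m) *
          (((star u) ^ k * u ^ k) * (u ^ l * (star u) ^ l) * u ^ m) =
        ((star u) ^ k * u ^ k) * (u ^ l * (star u) ^ l) * u ^ m ∧
      (((star u) ^ k * u ^ k) * (u ^ l * (star u) ^ l) * u ^ m) *
          star (((star u) ^ k * u ^ k) * (u ^ l * (star u) ^ l) * u ^ m) =
        ((star u) ^ k * u ^ k) * (u ^ max l m * (star u) ^ max l m) := by
  have hu : IsPowerPartialIsometry u := by
    intro k
    rcases Nat.eq_zero_or_pos k with rfl | hk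
    · simp [IsPartialIsometry]
    · simpa only [IsPartialIsometry, star_pow] using hpow k hk
  intro k l m
  exact ⟨hu.isPartialIsometry_initProj_mul_finalProj_mul_pow k l m,
    hu.initProj_mul_finalProj_mul_pow_mul_star k l m⟩
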